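/- Under the conditions α_n = ρ_{n-1}(1 - c_{n-1}) - ω² d_{n-1}/α_{n-1} and d_n α_{n-1} ρ_{n-1} = d_{n-1} α_n ρ_n for all n ≥ 1, any root δ of the quadratic x² + (f_n/e_n)x - f_n/e_n (with e_n = d_{n-1}, f_n = -α_{n-1}ρ_{n-1}) is also a root of the cubic p_n x³ + q_n x² + r_n x + s_n, where p_n, q_n, r_n, s_n are the coefficients from the perturbed GCRR recurrence. -/
import Mathlib


/-- under conditions (2.5)–(2.6), any root `δ` of the quadratic
`x² + (f_n/e_n) x - f_n/e_n` is also a root of the cubic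
`p_n x³ + q_n x² + r_n x + s_n`. -/
theorem stmt_12 (ω : ℝ) (ρ c d α : ℕ → ℝ)
    (hρ : ∀ n, ρ n ≠ 0) (hd : ∀ n, d n ≠ 0) (hα : ∀ n, α n ≠ 0)
    (hcond1 : ∀ n : ℕ, 1 ≤ n →
      α n * α (n - 1) = α (n - 1) * ρ (n - 1) * (1 - c (n - 1)) - ω ^ 2 * d (n - 1))
    (hcond2 : ∀ n : ℕ, 1 ≤ n →
      d n * α (n - 1) * ρ (n - 1) = d (n - 1) * α n * ρ n) :
    ∀ n : ℕ, 1 ≤ n → ∀ δ : ℝ,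
      (e f p q r s : ℝ) →
      e = d (n - 1) →
      f = -(α (n - 1) * ρ (n - 1)) →
      p = ρ n * d (n - 1) →
      q = α (n - 1) * (d n - ρ n * ρ (n - 1)) - d (n - 1) * (ρ n * c n + α (n + 1)) →
      r = α (n - 1) * ρ (n - 1) * (α (n + 1) + ρ n * (c n + c (n - 1)))
          + ρ n * d (n - 1) * ω ^ 2 →
      s = -(α (n - 1) * ρ (n - 1) * c (n - 1) + d (n - 1) * ω ^ 2)
            * (ρ n * c n + α (n + 1)) + α (n - 1) * d n * ω ^ 2 →
      δ ^ 2 + (f / e) * δ - f / e = 0 →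
      p * δ ^ 3 + q * δ ^ 2 + r * δ + s = 0 := by
  intro n hn δ e f p q r s he hf hp hq hr hs hquad
  subst he hf hp hq hr hs
  have h1 := hcond1 n hn
  have h2 := hcond1 (n + 1) (by omega)
  have h3 := hcond2 n hn
  simp only [Nat.add_sub_cancel] at h2
  set A := α (n - 1)
  set R := ρ (n - 1)
  set dm := d (n - 1)
  set cm := c (n - 1)
  have hdm : dm ≠ 0 := hd (n - 1)
  have hR : R ≠ 0 := hρ (n - 1)
  have hquad' : dm * δ ^ 2 - A * R * δ + A * R = 0 := by
    have := hquad
    field_simp at this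
    linarith [this]
  have key : R * (ρ n * dm * δ ^ 3
      + (A * (d n - ρ n * R) - dm * (ρ n * c n + α (n + 1))) * δ ^ 2
      + (A * R * (α (n + 1) + ρ n * (c n + cm)) + ρ n * dm * ω ^ 2) * δ
      + (-(A * R * cm + dm * ω ^ 2) * (ρ n * c n + α (n + 1)) + A * d n * ω ^ 2)) = 0 := by
    linear_combination
      (R * ρ n * δ + (α n * ρ n - R * ρ n * c n - R * α (n + 1))) * hquad'
      + δ ^ 2 * h3
      + (R * ρ n * δ - R * (ρ n * c n + α (n + 1))) * h1
      + R * A * h2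
  have := mul_eq_zero.mp key
  rcases this with h | h
  · exact absurd h hR
  · linear_combination h
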